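/- The q-Chebyshev polynomials satisfy T_n(x,s,q) = U_n(x,s,q) − q^n·x·U_{n-1}(x,s,q) for all n ≥ 1, where T_n is defined by T_0 = 1, T_1 = x, T_n = (1+q^{n-1})x·T_{n-1} + q^{n-1}s·T_{n-2}, and U_n by U_0 = 1, U_1 = (1+q)x, U_n = (1+q^n)x·U_{n-1} + q^{n-1}s·U_{n-2}. -/
import Mathlib


open Finset

noncomputable section

/-- The polynomial ring `ℤ[q,x,s]`. -/
abbrev R : Type := MvPolynomial (Fin 3) ℤ

def q : R := MvPolynomial.X 0
def x : R := MvPolynomial.X 1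
def s : R := MvPolynomial.X 2

/-- q-Chebyshev polynomials of the first kind:
`T 0 = 1`, `T 1 = x`, `T n = (1+q^(n-1)) x T (n-1) + q^(n-1) s T (n-2)`. -/
def chebT : ℕ → R
  | 0 => 1
  | 1 => x
  | (n + 2) => (1 + q ^ (n + 1)) * x * chebT (n + 1) + q ^ (n + 1) * s * chebT n

/-- q-Chebyshev polynomials of the second kind:
`U 0 = 1`, `U 1 = (1+q)x`, `U n = (1+q^n) x U (n-1) + q^(n-1) s U (n-2)`. -/
def chebU : ℕ → R
  | 0 => 1
  | 1 => (1 + q) * x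
  | (n + 2) => (1 + q ^ (n + 2)) * x * chebU (n + 1) + q ^ (n + 1) * s * chebU n

theorem chebT_eq_chebU_sub (n : ℕ) (hn : 1 ≤ n) :
    chebT n = chebU n - q ^ n * x * chebU (n - 1) := by
  induction n using Nat.strong_induction_on with
  | _ n ih =>
    match n, hn with
    | 1, _ => show chebT 1 = chebU 1 - q ^ 1 * x * chebU 0; simp [chebT, chebU]; ring
    | 2, _ => show chebT 2 = chebU 2 - q ^ 2 * x * chebU 1; simp [chebT, chebU]; ring
    | (n + 3), _ =>
      have h1 := ih (n + 2) (by omega) (by omega)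
      have h2 := ih (n + 1) (by omega) (by omega)
      simp only [show n + 2 - 1 = n + 1 from rfl] at h1
      simp only [Nat.add_sub_cancel] at h2 ⊢
      show chebT (n + 3) = chebU (n + 3) - q ^ (n + 3) * x * chebU (n + 2)
      rw [show chebT (n + 3) = (1 + q ^ (n + 2)) * x * chebT (n + 2) + q ^ (n + 2) * s * chebT (n + 1) from rfl,
        h1, h2,
        show chebU (n + 3) = (1 + q ^ (n + 3)) * x * chebU (n + 2) + q ^ (n + 2) * s * chebU (n + 1) from rfl,
        show chebU (n + 2) = (1 + q ^ (n + 2)) * x * chebU (n + 1) + q ^ (n + 1) * s * chebU n from rfl]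
      ring

end
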